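/- arXiv:1701.03508 — 4 statements merged into one kernel-verified Lean document; each statement's English description precedes it below -/
import Mathlib

section
/- Let u_i, M ∈ ℝ with M ≥ 0, let s ≤ t be real numbers, let u_j : ℝ → ℝ be integrable on [s, t] with |u_j(τ)| ≤ M for almost every τ ∈ [s, t], and define x_j(τ) = x_j(s) + ∫_s^τ u_j(σ) dσ and x_i(τ) = x_i(s) + u_i·(τ − s) for τ ∈ [s, t]. Then ∫_s^t −u_i·(x_j(τ) − x_i(τ)) dτ ≤ α·(t − s) + (1/2)·γ·(t − s)², where α = −u_i·(x_j(s) − x_i(s)) and γ = |u_i|·M + u_i². -/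
/-! Since `|u_j| ≤ M`, the displacement `∫_s^τ u_j` is at most `M (τ - s)` in absolute value, so
the integrand is dominated on `[s, t]` by the affine function `α + γ (τ - s)`, whose integral over
`[s, t]` is the right-hand side. -/

open MeasureTheory Set

theorem abs_integral_le_mul_sub_of_ae_abs_le {f : ℝ → ℝ} {M s t τ : ℝ} (hτ : τ ∈ Icc s t)
    (hf : ∀ᵐ x ∂(volume.restrict (Icc s t)), |f x| ≤ M) :
    |∫ x in s..τ, f x| ≤ M * (τ - s) := by
  have hf' : ∀ᵐ x, x ∈ uIoc s τ → ‖f x‖ ≤ M := by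
    filter_upwards [(ae_restrict_iff' measurableSet_Icc).mp hf] with x hx hxI
    rw [uIoc_of_le hτ.1] at hxI
    exact hx ⟨hxI.1.le, hxI.2.trans hτ.2⟩
  simpa [abs_of_nonneg (sub_nonneg.mpr hτ.1)] using
    intervalIntegral.norm_integral_le_of_norm_le_const_ae hf'

theorem integral_const_add_mul_sub (a c s t : ℝ) :
    ∫ τ in s..t, (a + c * (τ - s)) = a * (t - s) + c / 2 * (t - s) ^ 2 := by
  rw [intervalIntegral.integral_add intervalIntegrable_const
      ((by fun_prop : Continuous fun τ => c * (τ - s)).intervalIntegrable _ _),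
    intervalIntegral.integral_const_mul, intervalIntegral.integral_comp_sub_right (fun x => x),
    integral_id]
  simp only [intervalIntegral.integral_const, sub_self, smul_eq_mul]
  ring

theorem neg_mul_sub_le_of_abs_le {u M y x d X : ℝ} (hX : |X| ≤ M * d) :
    -u * ((y + X) - (x + u * d)) ≤ -u * (y - x) + (|u| * M + u ^ 2) * d := by
  have h : -u * X ≤ |u| * (M * d) :=
    calc -u * X ≤ |-u * X| := le_abs_self _
      _ = |u| * |X| := by rw [abs_mul, abs_neg]
      _ ≤ |u| * (M * d) := mul_le_mul_of_nonneg_left hX (abs_nonneg u)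
  linarith

theorem integral_pairwise_contribution_promise_bound_general
    (ui M s t : ℝ) (hst : s ≤ t)
    (uj : ℝ → ℝ) (hint : IntegrableOn uj (Set.Icc s t))
    (hbound : ∀ᵐ τ ∂(volume.restrict (Set.Icc s t)), |uj τ| ≤ M)
    (xjs xis : ℝ) :
    ∫ τ in s..t, -ui * ((xjs + ∫ σ in s..τ, uj σ) - (xis + ui * (τ - s))) ≤
      (-ui * (xjs - xis)) * (t - s) +
        (1 / 2 : ℝ) * (|ui| * M + ui ^ 2) * (t - s) ^ 2 := by
  have hprimitive : ContinuousOn (fun τ => ∫ σ in s..τ, uj σ) (uIcc s t) :=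
    intervalIntegral.continuousOn_primitive_interval (by rwa [uIcc_of_le hst])
  calc _ ≤ ∫ τ in s..t, (-ui * (xjs - xis) + (|ui| * M + ui ^ 2) * (τ - s)) := by
        refine intervalIntegral.integral_mono_on hst (ContinuousOn.intervalIntegrable ?_)
          ((by fun_prop : Continuous _).intervalIntegrable _ _)
          fun τ hτ => neg_mul_sub_le_of_abs_le (abs_integral_le_mul_sub_of_ae_abs_le hτ hbound)
        fun_prop
    _ = _ := by rw [integral_const_add_mul_sub]; ring

theorem integral_pairwise_contribution_promise_bound
    (ui M s t : ℝ) (hM : 0 ≤ M) (hst : s ≤ t)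
    (uj : ℝ → ℝ) (hint : IntegrableOn uj (Set.Icc s t))
    (hbound : ∀ᵐ τ ∂(volume.restrict (Set.Icc s t)), |uj τ| ≤ M)
    (xjs xis : ℝ) :
    ∫ τ in s..t, -ui * ((xjs + ∫ σ in s..τ, uj σ) - (xis + ui * (τ - s))) ≤
      (-ui * (xjs - xis)) * (t - s) +
        (1 / 2 : ℝ) * (|ui| * M + ui ^ 2) * (t - s) ^ 2 :=
  integral_pairwise_contribution_promise_bound_general ui M s t hst uj hint hbound xjs xis
end

section
/- Let u_i, M ∈ ℝ with M ≥ 0 and let s ≤ t be real numbers. There exists a constant (hence measurable and integrable) function u_j : ℝ → ℝ with |u_j(τ)| ≤ M for all τ, such that with x_j(τ) = x_j(s) + ∫_s^τ u_j(σ) dσ and x_i(τ) = x_i(s) + u_i·(τ − s), equality holds: ∫_s^t −u_i·(x_j(τ) − x_i(τ)) dτ = α·(t − s) + (1/2)·γ·(t − s)², where α = −u_i·(x_j(s) − x_i(s)) and γ = |u_i|·M + u_i². (The bound furnished by the promise M on the integrated pairwise contribution is tight.) -/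
open MeasureTheory

theorem integral_pairwise_contribution_promise_bound_tight
    (ui M s t : ℝ) (hM : 0 ≤ M) (hst : s ≤ t) (xjs xis : ℝ) :
    ∃ uj : ℝ → ℝ, (∃ c : ℝ, uj = fun _ => c) ∧ (∀ τ, |uj τ| ≤ M) ∧
      ∫ τ in s..t, -ui * ((xjs + ∫ σ in s..τ, uj σ) - (xis + ui * (τ - s))) =
        (-ui * (xjs - xis)) * (t - s) +
          (1 / 2 : ℝ) * (|ui| * M + ui ^ 2) * (t - s) ^ 2 := by
  set c : ℝ := if 0 ≤ ui then -M else M with hc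
  have hcM : |c| ≤ M := by
    rw [hc]; split
    · simp [abs_of_nonneg hM]
    · simp [abs_of_nonneg hM]
  have huic : -ui * c = |ui| * M := by
    rw [hc]; split
    · rw [abs_of_nonneg ‹0 ≤ ui›]; ring
    · rw [abs_of_neg (lt_of_not_ge ‹¬ 0 ≤ ui›)]
  refine ⟨fun _ => c, ⟨c, rfl⟩, fun τ => hcM, ?_⟩
  have key : ∀ τ : ℝ,
      -ui * ((xjs + ∫ σ in s..τ, c) - (xis + ui * (τ - s))) =
        (-ui * (xjs - xis)) + (|ui| * M + ui ^ 2) * (τ - s) := by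
    intro τ
    rw [intervalIntegral.integral_const, smul_eq_mul, ← huic]
    ring
  rw [intervalIntegral.integral_congr (fun τ _ => key τ),
    intervalIntegral.integral_add (intervalIntegrable_const)
      (by apply IntervalIntegrable.const_mul
          exact ((continuous_id.sub continuous_const).intervalIntegrable s t)),
    intervalIntegral.integral_const, intervalIntegral.integral_const_mul]
  have : (∫ τ in s..t, (τ - s)) = (t - s) ^ 2 / 2 := by
    have := intervalIntegral.integral_comp_sub_right (a := s) (b := t) (fun x => x) s
    rw [this, integral_id]
    ring
  rw [this]; simp [smul_eq_mul]; ring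
end

section
/- Let u_i, u_j, M ∈ ℝ with M ≥ 0 and let t₀ ≤ s ≤ t be real numbers. Suppose agent i's position is x_i(τ) = x_i(t₀) + u_i·(τ − t₀) for all τ ∈ [t₀, t], and neighbor j's position satisfies x_j(τ) = x_j(t₀) + u_j·(τ − t₀) for τ ∈ [t₀, s], and x_j(τ) = x_j(s) + ∫_s^τ w(σ) dσ for τ ∈ [s, t], where w : ℝ → ℝ is integrable on [s, t] with |w(τ)| ≤ M for almost every τ ∈ [s, t]. Then ∫_{t₀}^{t} −u_i·(x_j(τ) − x_i(τ)) dτ ≤ α(t₀)·(s − t₀) + (1/2)·β·(s − t₀)² + α(s)·(t − s) + (1/2)·γ·(t − s)², where α(r) = −u_i·(x_j(r) − x_i(r)), β = −u_i·(u_j − u_i), and γ = |u_i|·M + u_i². -/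
/-!
Split the integral at the surfacing time `s`. On `[t₀, s]` both agents move with known constant
controls, so the integrand is the affine function `α(t₀) + β (τ - t₀)` and its integral is exact.
On `[s, t]` the integrand is `α(s) - uᵢ ∫ₛ^τ w + uᵢ² (τ - s)`, and the promise `|w| ≤ M` bounds the
middle term by `|uᵢ| M (τ - s)`, so the integrand lies below the affine function `α(s) + γ (τ - s)`.
-/

open MeasureTheory Set

theorem integral_affine (a b c d : ℝ) :
    ∫ τ in a..b, (c + d * (τ - a)) = c * (b - a) + 1 / 2 * d * (b - a) ^ 2 := by
  rw [intervalIntegral.integral_add (f := fun _ => c) (g := fun τ => d * (τ - a))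
      intervalIntegrable_const
      ((continuous_const.mul (continuous_sub_right a)).intervalIntegrable _ _),
    intervalIntegral.integral_const_mul, intervalIntegral.integral_comp_sub_right (fun x => x)]
  simp only [intervalIntegral.integral_const, integral_id, smul_eq_mul, sub_self]
  ring

theorem integral_le_of_le_affine {f : ℝ → ℝ} {a b c d : ℝ} (hab : a ≤ b)
    (hf : ContinuousOn f (Icc a b)) (hle : ∀ τ ∈ Icc a b, f τ ≤ c + d * (τ - a)) :
    ∫ τ in a..b, f τ ≤ c * (b - a) + 1 / 2 * d * (b - a) ^ 2 :=
  integral_affine a b c d ▸ intervalIntegral.integral_mono_on hab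
    (hf.intervalIntegrable_of_Icc hab)
    ((continuous_const.add (continuous_const.mul (continuous_sub_right a))).intervalIntegrable _ _)
    hle

theorem integral_le_of_le_affine_of_le_affine {f : ℝ → ℝ} {t₀ s t c₁ d₁ c₂ d₂ : ℝ}
    (ht₀s : t₀ ≤ s) (hst : s ≤ t)
    (hf₁ : ContinuousOn f (Icc t₀ s)) (hf₂ : ContinuousOn f (Icc s t))
    (hle₁ : ∀ τ ∈ Icc t₀ s, f τ ≤ c₁ + d₁ * (τ - t₀))
    (hle₂ : ∀ τ ∈ Icc s t, f τ ≤ c₂ + d₂ * (τ - s)) :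
    ∫ τ in t₀..t, f τ ≤
      c₁ * (s - t₀) + 1 / 2 * d₁ * (s - t₀) ^ 2 + c₂ * (t - s) + 1 / 2 * d₂ * (t - s) ^ 2 := by
  rw [← intervalIntegral.integral_add_adjacent_intervals (hf₁.intervalIntegrable_of_Icc ht₀s)
    (hf₂.intervalIntegrable_of_Icc hst)]
  linarith [integral_le_of_le_affine ht₀s hf₁ hle₁, integral_le_of_le_affine hst hf₂ hle₂]

theorem abs_integral_le_of_ae_abs_le {w : ℝ → ℝ} {s t τ M : ℝ}
    (hbound : ∀ᵐ σ ∂(volume.restrict (Icc s t)), |w σ| ≤ M) (hτ : τ ∈ Icc s t) :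
    |∫ σ in s..τ, w σ| ≤ M * (τ - s) := by
  have hbound' : ∀ᵐ σ, σ ∈ uIoc s τ → ‖w σ‖ ≤ M := by
    rw [ae_restrict_iff' measurableSet_Icc] at hbound
    filter_upwards [hbound] with σ hσ hστ
    rw [uIoc_of_le hτ.1] at hστ
    exact hσ ⟨hστ.1.le, hστ.2.trans hτ.2⟩
  simpa [abs_of_nonneg (sub_nonneg.2 hτ.1)] using
    intervalIntegral.norm_integral_le_of_norm_le_const_ae hbound'

theorem integral_pairwise_contribution_two_phase_bound_general
    (ui uj M t0 s t : ℝ) (ht0s : t0 ≤ s) (hst : s ≤ t)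
    (xi xj : ℝ → ℝ)
    (hxi : ∀ τ ∈ Set.Icc t0 t, xi τ = xi t0 + ui * (τ - t0))
    (hxj1 : ∀ τ ∈ Set.Icc t0 s, xj τ = xj t0 + uj * (τ - t0))
    (w : ℝ → ℝ) (hint : IntegrableOn w (Set.Icc s t))
    (hbound : ∀ᵐ σ ∂(volume.restrict (Set.Icc s t)), |w σ| ≤ M)
    (hxj2 : ∀ τ ∈ Set.Icc s t, xj τ = xj s + ∫ σ in s..τ, w σ) :
    ∫ τ in t0..t, -ui * (xj τ - xi τ) ≤
      (-ui * (xj t0 - xi t0)) * (s - t0) +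
        (1 / 2 : ℝ) * (-ui * (uj - ui)) * (s - t0) ^ 2 +
      (-ui * (xj s - xi s)) * (t - s) +
        (1 / 2 : ℝ) * (|ui| * M + ui ^ 2) * (t - s) ^ 2 := by
  have hIcc₁ : Icc t0 s ⊆ Icc t0 t := Icc_subset_Icc_right hst
  have hIcc₂ : Icc s t ⊆ Icc t0 t := Icc_subset_Icc_left ht0s
  have hphase₁ : ∀ τ ∈ Icc t0 s,
      -ui * (xj τ - xi τ) = -ui * (xj t0 - xi t0) + -ui * (uj - ui) * (τ - t0) := by
    intro τ hτ
    rw [hxj1 τ hτ, hxi τ (hIcc₁ hτ)]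
    ring
  have hphase₂ : ∀ τ ∈ Icc s t, -ui * (xj τ - xi τ) =
      -ui * (xj s - xi s) - ui * (∫ σ in s..τ, w σ) + ui ^ 2 * (τ - s) := by
    intro τ hτ
    rw [hxj2 τ hτ, hxi τ (hIcc₂ hτ), hxi s (hIcc₂ ⟨le_rfl, hst⟩)]
    ring
  have hprimitive : ContinuousOn (fun τ => ∫ σ in s..τ, w σ) (Icc s t) := by
    have := intervalIntegral.continuousOn_primitive_interval (μ := volume)
      (by rwa [uIcc_of_le hst] : IntegrableOn w (uIcc s t))
    rwa [uIcc_of_le hst] at this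
  refine integral_le_of_le_affine_of_le_affine ht0s hst ?_ ?_
    (fun τ hτ => (hphase₁ τ hτ).le) (fun τ hτ => ?_)
  · exact (Continuous.continuousOn (by fun_prop)).congr hphase₁
  · exact (ContinuousOn.add (continuousOn_const.sub (continuousOn_const.mul hprimitive))
      (Continuous.continuousOn (by fun_prop))).congr hphase₂
  · have hdrift : -ui * ∫ σ in s..τ, w σ ≤ |ui| * (M * (τ - s)) := by
      calc -ui * ∫ σ in s..τ, w σ ≤ |ui| * |∫ σ in s..τ, w σ| := by
            rw [← abs_neg ui, ← abs_mul]; exact le_abs_self _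
        _ ≤ |ui| * (M * (τ - s)) :=
            mul_le_mul_of_nonneg_left (abs_integral_le_of_ae_abs_le hbound hτ) (abs_nonneg ui)
    rw [hphase₂ τ hτ]
    linarith

theorem integral_pairwise_contribution_two_phase_bound
    (ui uj M t0 s t : ℝ) (hM : 0 ≤ M) (ht0s : t0 ≤ s) (hst : s ≤ t)
    (xi xj : ℝ → ℝ)
    (hxi : ∀ τ ∈ Set.Icc t0 t, xi τ = xi t0 + ui * (τ - t0))
    (hxj1 : ∀ τ ∈ Set.Icc t0 s, xj τ = xj t0 + uj * (τ - t0))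
    (w : ℝ → ℝ) (hint : IntegrableOn w (Set.Icc s t))
    (hbound : ∀ᵐ σ ∂(volume.restrict (Set.Icc s t)), |w σ| ≤ M)
    (hxj2 : ∀ τ ∈ Set.Icc s t, xj τ = xj s + ∫ σ in s..τ, w σ) :
    ∫ τ in t0..t, -ui * (xj τ - xi τ) ≤
      (-ui * (xj t0 - xi t0)) * (s - t0) +
        (1 / 2 : ℝ) * (-ui * (uj - ui)) * (s - t0) ^ 2 +
      (-ui * (xj s - xi s)) * (t - s) +
        (1 / 2 : ℝ) * (|ui| * M + ui ^ 2) * (t - s) ^ 2 :=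
  integral_pairwise_contribution_two_phase_bound_general ui uj M t0 s t ht0s hst xi xj hxi hxj1 w
    hint hbound hxj2
end

section
/- Let A and B be disjoint finite index sets, let u_i ∈ ℝ, let t₀ ≤ t be real numbers, and let agent i's position be x_i(τ) = x_i(t₀) + u_i·(τ − t₀). For each j ∈ B, suppose x_j(τ) = x_j(t₀) + u_j·(τ − t₀) for τ ∈ [t₀, t] with u_j ∈ ℝ. For each j ∈ A, suppose there is s_j ∈ [t₀, t] and M_j ≥ 0 with x_j(τ) = x_j(s_j) + ∫_{s_j}^{τ} w_j(σ) dσ for τ ∈ [s_j, t], where w_j is integrable with |w_j(σ)| ≤ M_j almost everywhere on [s_j, t]. Then −u_i·∑_{j ∈ A ∪ B} (x_j(t) − x_i(t)) ≤ ∑_{j∈A} ( α_j(s_j) + γ_j·(t − s_j) ) + ∑_{j∈B} ( α_j(t₀) + β_j·(t − t₀) ), where α_j(r) = −u_i·(x_j(r) − x_i(r)), β_j = −u_i·(u_j − u_i), and γ_j = |u_i|·M_j + u_i². -/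
open Finset MeasureTheory

theorem objective_derivative_bound_mixed_neighbors
    {ι : Type*} [DecidableEq ι] (A B : Finset ι) (hAB : Disjoint A B)
    (ui t0 t : ℝ) (ht : t0 ≤ t)
    (xi : ℝ → ℝ) (hxi : ∀ τ ∈ Set.Icc t0 t, xi τ = xi t0 + ui * (τ - t0))
    (x : ι → ℝ → ℝ) (u : ι → ℝ)
    (hB : ∀ j ∈ B, ∀ τ ∈ Set.Icc t0 t, x j τ = x j t0 + u j * (τ - t0))
    (s M : ι → ℝ) (w : ι → ℝ → ℝ)
    (hs : ∀ j ∈ A, s j ∈ Set.Icc t0 t)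
    (hM : ∀ j ∈ A, 0 ≤ M j)
    (hint : ∀ j ∈ A, IntegrableOn (w j) (Set.Icc (s j) t))
    (hbound : ∀ j ∈ A, ∀ᵐ σ ∂(volume.restrict (Set.Icc (s j) t)), |w j σ| ≤ M j)
    (hA : ∀ j ∈ A, ∀ τ ∈ Set.Icc (s j) t, x j τ = x j (s j) + ∫ σ in (s j)..τ, w j σ) :
    -ui * ∑ j ∈ A ∪ B, (x j t - xi t) ≤
      ∑ j ∈ A, (-ui * (x j (s j) - xi (s j)) + (|ui| * M j + ui ^ 2) * (t - s j)) +
      ∑ j ∈ B, (-ui * (x j t0 - xi t0) + (-ui * (u j - ui)) * (t - t0)) := by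
  rw [Finset.sum_union hAB, mul_add]
  apply add_le_add
  · rw [Finset.mul_sum]
    apply Finset.sum_le_sum
    intro j hj
    obtain ⟨hs0, hst⟩ := hs j hj
    have hxt : x j t = x j (s j) + ∫ σ in (s j)..t, w j σ :=
      hA j hj t ⟨hst, le_refl t⟩
    have hxit : xi t = xi t0 + ui * (t - t0) := hxi t ⟨ht, le_refl t⟩
    have hxis : xi (s j) = xi t0 + ui * (s j - t0) := hxi (s j) (hs j hj)
    have hI : |∫ σ in (s j)..t, w j σ| ≤ M j * (t - s j) := by
      have hae : ∀ᵐ σ ∂(volume : Measure ℝ), σ ∈ Set.uIoc (s j) t → |w j σ| ≤ M j := by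
        have := (ae_restrict_iff' measurableSet_Icc).mp (hbound j hj)
        filter_upwards [this] with σ hσ hmem
        exact hσ (Set.Ioc_subset_Icc_self ((Set.uIoc_of_le hst) ▸ hmem))
      have := intervalIntegral.norm_integral_le_of_norm_le_const_ae (f := w j)
        (a := s j) (b := t) (C := M j) hae
      simpa [abs_of_nonneg (sub_nonneg.mpr hst)] using this
    have key : -ui * (x j t - xi t) =
        -ui * (x j (s j) - xi (s j)) + (-ui) * (∫ σ in (s j)..t, w j σ)
          + ui ^ 2 * (t - s j) := by
      rw [hxt, hxit, hxis]; ring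
    rw [key]
    have h2 : (-ui) * (∫ σ in (s j)..t, w j σ) ≤ |ui| * (M j * (t - s j)) := by
      calc (-ui) * (∫ σ in (s j)..t, w j σ) ≤ |(-ui) * (∫ σ in (s j)..t, w j σ)| :=
            le_abs_self _
        _ = |ui| * |∫ σ in (s j)..t, w j σ| := by rw [abs_mul, abs_neg]
        _ ≤ |ui| * (M j * (t - s j)) := by
            exact mul_le_mul_of_nonneg_left hI (abs_nonneg ui)
    nlinarith [h2]
  · rw [Finset.mul_sum]
    apply le_of_eq
    apply Finset.sum_congr rfl
    intro j hj
    rw [hB j hj t ⟨ht, le_refl t⟩, hxi t ⟨ht, le_refl t⟩]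
    ring
end
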